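/- In Ruleset C' of Quantum Nim (a single classical move is legal iff it is legal in every realisation in which the mover still has at least one classical move), the Grundy value of a superposition of single Nim heaps with heap sizes S and maximum k is: 0 if S = {1,2} or S = {0,1,2}; 1 if k = 1; k−1 if k−1 ∈ S (and S is not one of the two exceptions); and k otherwise. -/

import Mathlib

namespace QGame

variable {Pos Move : Type} [DecidableEq Pos]

/-- Result of applying the superposed move `M` (a finite set of classical move
labels) to the superposition `S` of classical positions: the set of all results
of a classical move of `M` applied to a realisation where it is legal. -/
def qApply (Γ : Pos → Move → Option Pos) (S : Finset Pos) (M : Finset Move) :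
    Finset Pos :=
  S.biUnion fun G => M.biUnion fun m => (Γ G m).toFinset

/-- The classical move `m` is legal in at least one realisation of `S`. -/
def MoveLegal (Γ : Pos → Move → Option Pos) (S : Finset Pos) (m : Move) : Prop :=
  ∃ G ∈ S, (Γ G m).isSome

/-- Basic legality of a Q-move: nonempty, and each classical move is legal
in at least one realisation. -/
def QBase (Γ : Pos → Move → Option Pos) (S : Finset Pos) (M : Finset Move) : Prop :=
  M.Nonempty ∧ ∀ m ∈ M, MoveLegal Γ S m

/-- Ruleset A : superpositions of at least two distinct classical moves. -/
def QLegalA (Γ : Pos → Move → Option Pos) (S : Finset Pos) (M : Finset Move) : Prop :=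
  QBase Γ S M ∧ 2 ≤ M.card

/-- Ruleset B : as A, except a lone classical move may be played when it is the
only legal classical move over all realisations. -/
def QLegalB (Γ : Pos → Move → Option Pos) (S : Finset Pos) (M : Finset Move) : Prop :=
  QBase Γ S M ∧ (2 ≤ M.card ∨ ∀ m, MoveLegal Γ S m → m ∈ M)

/-- Ruleset C : a lone classical move must be legal in every realisation. -/
def QLegalC (Γ : Pos → Move → Option Pos) (S : Finset Pos) (M : Finset Move) : Prop :=
  QBase Γ S M ∧ (2 ≤ M.card ∨ ∀ G ∈ S, ∀ m ∈ M, (Γ G m).isSome)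

/-- A single classical move is C'-allowed: legal in every realisation where the
mover still has at least one classical move. -/
def SingleLegalC' (Γ : Pos → Move → Option Pos) (S : Finset Pos) (m : Move) : Prop :=
  ∀ G ∈ S, (∃ m', (Γ G m').isSome) → (Γ G m).isSome

/-- Ruleset C'. -/
def QLegalC' (Γ : Pos → Move → Option Pos) (S : Finset Pos) (M : Finset Move) : Prop :=
  QBase Γ S M ∧ (2 ≤ M.card ∨ ∀ m ∈ M, SingleLegalC' Γ S m)

/-- Ruleset D : any nonempty superposition of legal classical moves. -/
def QLegalD (Γ : Pos → Move → Option Pos) (S : Finset Pos) (M : Finset Move) : Prop :=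
  QBase Γ S M

def optA (Γ : Pos → Move → Option Pos) (S : Finset Pos) : Set (Finset Pos) :=
  {T | ∃ M, QLegalA Γ S M ∧ T = qApply Γ S M}
def optB (Γ : Pos → Move → Option Pos) (S : Finset Pos) : Set (Finset Pos) :=
  {T | ∃ M, QLegalB Γ S M ∧ T = qApply Γ S M}
def optC (Γ : Pos → Move → Option Pos) (S : Finset Pos) : Set (Finset Pos) :=
  {T | ∃ M, QLegalC Γ S M ∧ T = qApply Γ S M}
def optC' (Γ : Pos → Move → Option Pos) (S : Finset Pos) : Set (Finset Pos) :=
  {T | ∃ M, QLegalC' Γ S M ∧ T = qApply Γ S M}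
def optD (Γ : Pos → Move → Option Pos) (S : Finset Pos) : Set (Finset Pos) :=
  {T | ∃ M, QLegalD Γ S M ∧ T = qApply Γ S M}

/-- `NPos opt p` : under normal play, the player to move from `p` wins,
i.e. there is a move to a position all of whose options are again `NPos`
(that is, to a previous-player-win position). -/
inductive NPos {α : Type*} (opt : α → Set α) : α → Prop where
  | mk (p q : α) (hq : q ∈ opt p) (h : ∀ r, r ∈ opt q → NPos opt r) :
      NPos opt p

/-- `PPos opt p` : `p` is a previous-player win (the second player wins)
under normal play: every option is a next-player win. -/
def PPos {α : Type*} (opt : α → Set α) (p : α) : Prop :=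
  ∀ q ∈ opt p, NPos opt q

/-- Options of the sum of a game with a classical Nim heap: move in the game
component, or decrease the heap component. -/
def sumNimOpt {α : Type*} (opt : α → Set α) : α × ℕ → Set (α × ℕ) :=
  fun x => {y | (y.1 ∈ opt x.1 ∧ y.2 = x.2) ∨ (y.1 = x.1 ∧ y.2 < x.2)}

/-- `HasGrundy opt p n` : position `p` has Sprague–Grundy value `n` (the value
obtained by the mex rule). By the Sprague–Grundy theorem this holds iff the sum
of `p` with a Nim heap of `n` tokens is a previous-player win. -/
def HasGrundy {α : Type*} (opt : α → Set α) (p : α) (n : ℕ) : Prop :=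
  PPos (sumNimOpt opt) (p, n)

/-- Classical single-heap Nim: from a heap of `n` tokens, the move labelled `x`
removes `x` tokens, legal when `1 ≤ x ≤ n`. -/
def nimΓ : ℕ → ℕ → Option ℕ := fun n x =>
  if 1 ≤ x ∧ x ≤ n then some (n - x) else none

end QGame

/-!
The value of `S` depends only on its maximum `k` and on whether `k - 1 ∈ S`, and never exceeds `k`.
An option of `S` has a smaller maximum, hence a smaller value, so only two values need care.
From `{1, 2}` or `{0, 1, 2}` the lone move `2` is forbidden, so every option has maximum `1` and
value `1 ≠ 0`. If `k ≥ 3` and `k - 1 ∈ S`, an option either removes at least `2` tokens everywhere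
(maximum `≤ k - 2`) or removes `1` from both `k` and `k - 1`, so it contains its maximum `k - 1`
together with `k - 2`, which keeps its value below `k - 1`. Each smaller value `v` is reached by
superposing the removal of the whole heap `k` with removals that make `v` the new maximum (not
followed by `v - 1`), or `v + 1` the new maximum followed by `v`. The mex rule then yields the
Grundy value by well-founded induction on the maximum.
-/

namespace QGame

open Finset

theorem hasGrundy_of_mex {α : Type*} {opt : α → Set α}
    (hwf : WellFounded fun q p => q ∈ opt p) (g : α → ℕ)
    (hne : ∀ p, ∀ q ∈ opt p, g q ≠ g p)
    (hreach : ∀ p, ∀ v < g p, ∃ q ∈ opt p, g q = v) (p : α) :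
    HasGrundy opt p (g p) := by
  suffices key : ∀ p, HasGrundy opt p (g p) ∧ ∀ n ≠ g p, NPos (sumNimOpt opt) (p, n) from
    (key p).1
  intro p
  induction p using hwf.induction with
  | _ p ih =>
  have below : ∀ n < g p, NPos (sumNimOpt opt) (p, n) := by
    intro n hn
    obtain ⟨q, hq, rfl⟩ := hreach p n hn
    exact NPos.mk _ (q, g q) (Or.inl ⟨hq, rfl⟩) (ih q hq).1
  have hp : HasGrundy opt p (g p) := by
    rintro ⟨q, n⟩ (⟨hq, rfl⟩ | ⟨rfl, hn⟩)
    · exact (ih q hq).2 _ (hne p q hq).symm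
    · exact below n hn
  refine ⟨hp, fun n hn => ?_⟩
  rcases lt_or_gt_of_ne hn with hlt | hgt
  · exact below n hlt
  · exact NPos.mk _ (p, g p) (Or.inr ⟨rfl, hgt⟩) hp

theorem qApply_mem_optC' {Pos Move : Type} [DecidableEq Pos] {Γ : Pos → Move → Option Pos}
    {S : Finset Pos} {M : Finset Move} (h : QLegalC' Γ S M) : qApply Γ S M ∈ optC' Γ S :=
  ⟨M, h, rfl⟩

theorem sup_id_eq_of_mem_of_le {α : Type*} [SemilatticeSup α] [OrderBot α] {s : Finset α} {a : α}
    (ha : a ∈ s) (hle : ∀ b ∈ s, b ≤ a) : s.sup id = a :=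
  le_antisymm (Finset.sup_le hle) (le_sup (f := id) ha)

theorem sup_id_mem {S : Finset ℕ} (h : S.sup id ≠ 0) : S.sup id ∈ S := by
  have hne : S.Nonempty := nonempty_iff_ne_empty.2 (by rintro rfl; exact h rfl)
  obtain ⟨n, hn, he⟩ := exists_mem_eq_sup S hne id
  rwa [he]

theorem nimΓ_eq_some_iff {n x p : ℕ} : nimΓ n x = some p ↔ 1 ≤ x ∧ x ≤ n ∧ n - x = p := by
  unfold nimΓ
  split_ifs with h <;> simp_all

theorem nimΓ_isSome_iff {n x : ℕ} : (nimΓ n x).isSome ↔ 1 ≤ x ∧ x ≤ n := by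
  unfold nimΓ
  split_ifs with h <;> simp [h]

theorem mem_qApply_nimΓ {S M : Finset ℕ} {p : ℕ} :
    p ∈ qApply nimΓ S M ↔ ∃ n ∈ S, ∃ x ∈ M, 1 ≤ x ∧ x ≤ n ∧ n - x = p := by
  simp only [qApply, mem_biUnion, Option.mem_toFinset, Option.mem_def, nimΓ_eq_some_iff]

theorem le_sub_of_mem_qApply_nimΓ {S M : Finset ℕ} {k m p : ℕ} (hS : ∀ n ∈ S, n ≤ k)
    (hM : ∀ x ∈ M, m ≤ x) (hp : p ∈ qApply nimΓ S M) : p ≤ k - m := by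
  obtain ⟨n, hn, x, hx, -, -, rfl⟩ := mem_qApply_nimΓ.1 hp
  have := hS n hn
  have := hM x hx
  omega

theorem qLegalC'_nimΓ_iff {S M : Finset ℕ} :
    QLegalC' nimΓ S M ↔ M.Nonempty ∧ (∀ x ∈ M, ∃ n ∈ S, 1 ≤ x ∧ x ≤ n) ∧
      (1 < #M ∨ ∀ x ∈ M, ∀ n ∈ S, 1 ≤ n → x ≤ n) := by
  simp only [QLegalC', QBase, MoveLegal, SingleLegalC', nimΓ_isSome_iff, Nat.lt_iff_add_one_le]
  constructor
  · rintro ⟨⟨hne, hleg⟩, hsingle⟩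
    exact ⟨hne, hleg, hsingle.imp_right fun h x hx n hn h1 => (h x hx n hn ⟨1, le_rfl, h1⟩).2⟩
  · rintro ⟨hne, hleg, hsingle⟩
    refine ⟨⟨hne, hleg⟩, hsingle.imp_right fun h x hx n hn ⟨m, hm1, hmn⟩ => ⟨?_, ?_⟩⟩
    · obtain ⟨_, _, h1, _⟩ := hleg x hx
      exact h1
    · exact h x hx n hn (hm1.trans hmn)

theorem qLegalC'_nimΓ_of_one_lt_card {S M : Finset ℕ} {k : ℕ} (hk : k ∈ S)
    (hM : ∀ x ∈ M, 1 ≤ x ∧ x ≤ k) (hcard : 1 < #M) : QLegalC' nimΓ S M :=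
  qLegalC'_nimΓ_iff.2 ⟨card_pos.1 (by omega), fun x hx => ⟨k, hk, hM x hx⟩, Or.inl hcard⟩

theorem qLegalC'_nimΓ_singleton {S : Finset ℕ} {x : ℕ} (hx : x ∈ S) (h1 : 1 ≤ x)
    (hmin : ∀ n ∈ S, 1 ≤ n → x ≤ n) : QLegalC' nimΓ S {x} :=
  qLegalC'_nimΓ_iff.2 ⟨singleton_nonempty x, by simpa using ⟨x, hx, h1, le_rfl⟩,
    Or.inr (by simpa using hmin)⟩

theorem sup_lt_of_mem_optC' {S T : Finset ℕ} (hT : T ∈ optC' nimΓ S) : T.sup id < S.sup id := by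
  obtain ⟨M, hM, rfl⟩ := hT
  obtain ⟨⟨x, hx⟩, hleg, -⟩ := qLegalC'_nimΓ_iff.1 hM
  obtain ⟨n, hn, h1, hxn⟩ := hleg x hx
  have hpos : 1 ≤ S.sup id := h1.trans (hxn.trans (le_sup (f := id) hn))
  have hle : (qApply nimΓ S M).sup id ≤ S.sup id - 1 :=
    Finset.sup_le fun p hp => le_sub_of_mem_qApply_nimΓ (fun n hn => le_sup (f := id) hn)
      (fun y hy => by obtain ⟨_, _, hy1, _⟩ := hleg y hy; exact hy1) hp
  omega

theorem wellFounded_optC'_nimΓ : WellFounded fun T S : Finset ℕ => T ∈ optC' nimΓ S :=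
  Subrelation.wf sup_lt_of_mem_optC' (InvImage.wf (fun S : Finset ℕ => S.sup id) wellFounded_lt)

/-- `S.sup id` plays the role of the maximum `k`; for `S = ∅` it is `0`, the correct value of a
position without options. -/
def nimC'Value (S : Finset ℕ) : ℕ :=
  if S = ({1, 2} : Finset ℕ) ∨ S = ({0, 1, 2} : Finset ℕ) then 0
  else if S.sup id = 1 then 1
  else if S.sup id - 1 ∈ S then S.sup id - 1
  else S.sup id

theorem eq_pair_or_eq_triple_iff {S : Finset ℕ} :
    S = ({1, 2} : Finset ℕ) ∨ S = ({0, 1, 2} : Finset ℕ) ↔ S.sup id = 2 ∧ 1 ∈ S := by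
  constructor
  · rintro (rfl | rfl) <;> decide
  · rintro ⟨h2, h1⟩
    have hsub : S ∈ (range 3).powerset :=
      mem_powerset.2 fun n hn => mem_range.2 (Nat.lt_succ_of_le (h2 ▸ le_sup (f := id) hn))
    have key : ∀ T ∈ (range 3).powerset, T.sup id = 2 → 1 ∈ T →
        T = ({1, 2} : Finset ℕ) ∨ T = ({0, 1, 2} : Finset ℕ) := by decide
    exact key S hsub h2 h1

theorem nimC'Value_cases (S : Finset ℕ) :
    (S.sup id = 2 ∧ 1 ∈ S ∧ nimC'Value S = 0) ∨
    (S.sup id ≤ 1 ∧ nimC'Value S = S.sup id) ∨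
    (2 ≤ S.sup id ∧ S.sup id - 1 ∉ S ∧ nimC'Value S = S.sup id) ∨
    (3 ≤ S.sup id ∧ S.sup id - 1 ∈ S ∧ nimC'Value S = S.sup id - 1) := by
  unfold nimC'Value
  split_ifs with hexc h1 hpred
  · exact Or.inl ⟨(eq_pair_or_eq_triple_iff.1 hexc).1, (eq_pair_or_eq_triple_iff.1 hexc).2, rfl⟩
  · exact Or.inr (Or.inl ⟨h1.le, h1.symm⟩)
  · have h2 : S.sup id ≠ 2 := fun h2 =>
      hexc (eq_pair_or_eq_triple_iff.2 ⟨h2, by simpa [h2] using hpred⟩)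
    by_cases h3 : 3 ≤ S.sup id
    · exact Or.inr (Or.inr (Or.inr ⟨h3, hpred, rfl⟩))
    · exact Or.inr (Or.inl ⟨by omega, by omega⟩)
  · by_cases h2 : 2 ≤ S.sup id
    · exact Or.inr (Or.inr (Or.inl ⟨h2, hpred, rfl⟩))
    · exact Or.inr (Or.inl ⟨by omega, rfl⟩)

theorem nimC'Value_le_sup (S : Finset ℕ) : nimC'Value S ≤ S.sup id := by
  rcases nimC'Value_cases S with ⟨-, -, h⟩ | ⟨-, h⟩ | ⟨-, -, h⟩ | ⟨-, -, h⟩ <;> omega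

theorem nimC'Value_lt_sup {S : Finset ℕ} (h2 : 2 ≤ S.sup id) (hpred : S.sup id - 1 ∈ S) :
    nimC'Value S < S.sup id := by
  rcases nimC'Value_cases S with ⟨-, -, h⟩ | ⟨hle, -⟩ | ⟨-, hn, -⟩ | ⟨-, -, h⟩
  · omega
  · omega
  · exact absurd hpred hn
  · omega

theorem nimC'Value_of_sup_eq_one {S : Finset ℕ} (h1 : S.sup id = 1) : nimC'Value S = 1 := by
  rcases nimC'Value_cases S with ⟨h2, -, -⟩ | ⟨-, h⟩ | ⟨h2, -, -⟩ | ⟨h3, -, -⟩ <;> omega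

theorem nimC'Value_of_sub_one_not_mem {S : Finset ℕ} (hpred : S.sup id - 1 ∉ S) :
    nimC'Value S = S.sup id := by
  rcases nimC'Value_cases S with ⟨h2, h1, -⟩ | ⟨-, h⟩ | ⟨-, -, h⟩ | ⟨-, hp, -⟩
  · exact absurd (by rwa [h2]) hpred
  · exact h
  · exact h
  · exact absurd hp hpred

theorem nimC'Value_of_three_le {S : Finset ℕ} (h3 : 3 ≤ S.sup id) (hpred : S.sup id - 1 ∈ S) :
    nimC'Value S = S.sup id - 1 := by
  rcases nimC'Value_cases S with ⟨h2, -, -⟩ | ⟨hle, -⟩ | ⟨-, hn, -⟩ | ⟨-, -, h⟩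
  · omega
  · omega
  · exact absurd hpred hn
  · exact h

theorem nimC'Value_of_sup_eq_two {S : Finset ℕ} (h2 : S.sup id = 2) (h1 : 1 ∈ S) :
    nimC'Value S = 0 := by
  rcases nimC'Value_cases S with ⟨-, -, h⟩ | ⟨hle, -⟩ | ⟨-, hn, -⟩ | ⟨h3, -, -⟩
  · exact h
  · omega
  · exact absurd (by rwa [h2]) hn
  · omega

/-- With a heap of size `1` among the realisations, the only lone move allowed is `1`, so every
option of `S ⊆ {0, 1, 2}` removes `1` from the heap of size `2`. -/
theorem sup_eq_one_of_mem_optC' {S T : Finset ℕ} (h2 : S.sup id = 2) (h1 : 1 ∈ S)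
    (hT : T ∈ optC' nimΓ S) : T.sup id = 1 := by
  obtain ⟨M, hM, rfl⟩ := hT
  obtain ⟨⟨x, hx⟩, hleg, hsingle⟩ := qLegalC'_nimΓ_iff.1 hM
  have hS : ∀ n ∈ S, n ≤ 2 := fun n hn => h2 ▸ le_sup (f := id) hn
  have hrange : ∀ y ∈ M, 1 ≤ y ∧ y ≤ 2 := fun y hy => by
    obtain ⟨n, hn, hy1, hyn⟩ := hleg y hy
    exact ⟨hy1, hyn.trans (hS n hn)⟩
  have h1M : 1 ∈ M := by
    rcases hsingle with hcard | hmin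
    · obtain ⟨a, ha, b, hb, hab⟩ := one_lt_card.1 hcard
      have := hrange a ha
      have := hrange b hb
      obtain rfl | rfl : a = 1 ∨ b = 1 := by omega
      exacts [ha, hb]
    · have := hmin x hx 1 h1 le_rfl
      have := hrange x hx
      obtain rfl : x = 1 := by omega
      exact hx
  refine sup_id_eq_of_mem_of_le ?_ fun p hp =>
    le_sub_of_mem_qApply_nimΓ hS (fun y hy => (hrange y hy).1) hp
  exact mem_qApply_nimΓ.2 ⟨2, h2 ▸ sup_id_mem (by omega), 1, h1M, le_rfl, by omega, rfl⟩

theorem nimC'Value_lt_of_mem_optC' {S T : Finset ℕ} (h3 : 3 ≤ S.sup id)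
    (hpred : S.sup id - 1 ∈ S) (hT : T ∈ optC' nimΓ S) : nimC'Value T < S.sup id - 1 := by
  obtain ⟨M, hM, rfl⟩ := hT
  obtain ⟨-, hleg, -⟩ := qLegalC'_nimΓ_iff.1 hM
  have hS : ∀ n ∈ S, n ≤ S.sup id := fun n hn => le_sup (f := id) hn
  by_cases h1M : 1 ∈ M
  · have hsup : (qApply nimΓ S M).sup id = S.sup id - 1 := by
      refine sup_id_eq_of_mem_of_le ?_ fun p hp => le_sub_of_mem_qApply_nimΓ hS
        (fun y hy => by obtain ⟨_, _, hy1, _⟩ := hleg y hy; exact hy1) hp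
      exact mem_qApply_nimΓ.2 ⟨_, sup_id_mem (by omega), 1, h1M, le_rfl, by omega, rfl⟩
    have hpred' : (qApply nimΓ S M).sup id - 1 ∈ qApply nimΓ S M :=
      mem_qApply_nimΓ.2 ⟨_, hpred, 1, h1M, le_rfl, by omega, by omega⟩
    have := nimC'Value_lt_sup (by omega) hpred'
    omega
  · have hsup : (qApply nimΓ S M).sup id ≤ S.sup id - 2 :=
      Finset.sup_le fun p hp => le_sub_of_mem_qApply_nimΓ hS (fun y hy => by
        obtain ⟨_, _, hy1, _⟩ := hleg y hy
        have : y ≠ 1 := fun h => h1M (h ▸ hy)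
        omega) hp
    have := nimC'Value_le_sup (qApply nimΓ S M)
    omega

theorem nimC'Value_ne_of_mem_optC' {S T : Finset ℕ} (hT : T ∈ optC' nimΓ S) :
    nimC'Value T ≠ nimC'Value S := by
  have hlt := sup_lt_of_mem_optC' hT
  have hle := nimC'Value_le_sup T
  rcases nimC'Value_cases S with ⟨h2, h1, hS⟩ | ⟨-, hS⟩ | ⟨-, -, hS⟩ | ⟨h3, hpred, hS⟩
  · rw [hS, nimC'Value_of_sup_eq_one (sup_eq_one_of_mem_optC' h2 h1 hT)]
    exact one_ne_zero
  · omega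
  · omega
  · have := nimC'Value_lt_of_mem_optC' h3 hpred hT
    omega

section Options

variable {S : Finset ℕ} {k : ℕ}

theorem exists_mem_optC'_nimC'Value_eq_zero_of_forall_eq_zero_or_eq (hk : k ∈ S) (hk1 : 1 ≤ k)
    (hS : ∀ n ∈ S, n = 0 ∨ n = k) : ∃ T ∈ optC' nimΓ S, nimC'Value T = 0 := by
  have hmin : ∀ n ∈ S, 1 ≤ n → k ≤ n := fun n hn hn1 => by rcases hS n hn with rfl | rfl <;> omega
  refine ⟨_, qApply_mem_optC' (qLegalC'_nimΓ_singleton hk hk1 hmin), ?_⟩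
  have hsup : (qApply nimΓ S {k}).sup id ≤ 0 :=
    Finset.sup_le fun p hp => (le_sub_of_mem_qApply_nimΓ (k := k)
      (fun n hn => by have := hS n hn; omega) (fun x hx => (mem_singleton.1 hx).ge) hp).trans
      (by omega)
  have := nimC'Value_le_sup (qApply nimΓ S {k})
  omega

theorem exists_mem_optC'_nimC'Value_eq_zero_of_three_le (hk : k ∈ S) (hS : ∀ n ∈ S, n ≤ k)
    (hk3 : 3 ≤ k) : ∃ T ∈ optC' nimΓ S, nimC'Value T = 0 := by
  set M : Finset ℕ := {k - 2, k - 1, k}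
  have hM : ∀ x ∈ M, k - 2 ≤ x ∧ x ≤ k := by simp only [M, mem_insert, mem_singleton]; omega
  have hlegal : QLegalC' nimΓ S M := qLegalC'_nimΓ_of_one_lt_card hk
    (fun x hx => by have := hM x hx; omega)
    (one_lt_card.2 ⟨k - 1, by simp [M], k, by simp [M], by omega⟩)
  refine ⟨_, qApply_mem_optC' hlegal, nimC'Value_of_sup_eq_two ?_ ?_⟩
  · refine sup_id_eq_of_mem_of_le ?_ fun p hp =>
      le_sub_of_mem_qApply_nimΓ hS (fun x hx => (hM x hx).1) hp |>.trans (by omega)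
    exact mem_qApply_nimΓ.2 ⟨k, hk, k - 2, by simp [M], by omega, by omega, by omega⟩
  · exact mem_qApply_nimΓ.2 ⟨k, hk, k - 1, by simp [M], by omega, by omega, by omega⟩

theorem exists_mem_optC'_nimC'Value_eq_one (hk : k ∈ S) (hS : ∀ n ∈ S, n ≤ k) (hk2 : 2 ≤ k) :
    ∃ T ∈ optC' nimΓ S, nimC'Value T = 1 := by
  set M : Finset ℕ := {k - 1, k}
  have hM : ∀ x ∈ M, k - 1 ≤ x ∧ x ≤ k := by simp only [M, mem_insert, mem_singleton]; omega
  have hlegal : QLegalC' nimΓ S M := qLegalC'_nimΓ_of_one_lt_card hk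
    (fun x hx => by have := hM x hx; omega)
    (one_lt_card.2 ⟨k - 1, by simp [M], k, by simp [M], by omega⟩)
  refine ⟨_, qApply_mem_optC' hlegal, nimC'Value_of_sup_eq_one ?_⟩
  refine sup_id_eq_of_mem_of_le ?_ fun p hp =>
    le_sub_of_mem_qApply_nimΓ hS (fun x hx => (hM x hx).1) hp |>.trans (by omega)
  exact mem_qApply_nimΓ.2 ⟨k, hk, k - 1, by simp [M], by omega, by omega, by omega⟩

/-- Removing `k - v` or all of `k` could leave `v - 1` only from the missing heap `k - 1`. -/
theorem exists_mem_optC'_nimC'Value_eq_of_sub_one_not_mem (hk : k ∈ S) (hS : ∀ n ∈ S, n ≤ k)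
    (hpred : k - 1 ∉ S) {v : ℕ} (hv2 : 2 ≤ v) (hvk : v < k) :
    ∃ T ∈ optC' nimΓ S, nimC'Value T = v := by
  set M : Finset ℕ := {k - v, k}
  have hM : ∀ x ∈ M, x = k - v ∨ x = k := by simp [M]
  have hlegal : QLegalC' nimΓ S M := qLegalC'_nimΓ_of_one_lt_card hk
    (fun x hx => by have := hM x hx; omega)
    (one_lt_card.2 ⟨k - v, by simp [M], k, by simp [M], by omega⟩)
  refine ⟨_, qApply_mem_optC' hlegal, ?_⟩
  have hsup : (qApply nimΓ S M).sup id = v := by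
    refine sup_id_eq_of_mem_of_le ?_ fun p hp =>
      le_sub_of_mem_qApply_nimΓ (m := k - v) hS (fun x hx => by have := hM x hx; omega) hp
        |>.trans (by omega)
    exact mem_qApply_nimΓ.2 ⟨k, hk, k - v, by simp [M], by omega, by omega, by omega⟩
  have hgap : v - 1 ∉ qApply nimΓ S M := by
    intro hmem
    obtain ⟨n, hn, x, hx, -, hxn, hnx⟩ := mem_qApply_nimΓ.1 hmem
    have := hS n hn
    rcases hM x hx with rfl | rfl
    · exact hpred (by rwa [show k - 1 = n by omega])
    · omega
  rw [nimC'Value_of_sub_one_not_mem (hsup ▸ hgap), hsup]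

/-- Removing `k - 1 - v` from the heaps `k` and `k - 1` leaves `v + 1` and `v`. -/
theorem exists_mem_optC'_nimC'Value_eq_of_sub_one_mem (hk : k ∈ S) (hS : ∀ n ∈ S, n ≤ k)
    (hpred : k - 1 ∈ S) {v : ℕ} (hv2 : 2 ≤ v) (hvk : v + 2 ≤ k) :
    ∃ T ∈ optC' nimΓ S, nimC'Value T = v := by
  set M : Finset ℕ := {k - 1 - v, k - 1, k}
  have hM : ∀ x ∈ M, k - 1 - v ≤ x ∧ x ≤ k := by
    simp only [M, mem_insert, mem_singleton]; omega
  have hlegal : QLegalC' nimΓ S M := qLegalC'_nimΓ_of_one_lt_card hk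
    (fun x hx => by have := hM x hx; omega)
    (one_lt_card.2 ⟨k - 1, by simp [M], k, by simp [M], by omega⟩)
  refine ⟨_, qApply_mem_optC' hlegal, ?_⟩
  have hsup : (qApply nimΓ S M).sup id = v + 1 := by
    refine sup_id_eq_of_mem_of_le ?_ fun p hp =>
      le_sub_of_mem_qApply_nimΓ hS (fun x hx => (hM x hx).1) hp |>.trans (by omega)
    exact mem_qApply_nimΓ.2 ⟨k, hk, k - 1 - v, by simp [M], by omega, by omega, by omega⟩
  have hv : v ∈ qApply nimΓ S M :=
    mem_qApply_nimΓ.2 ⟨k - 1, hpred, k - 1 - v, by simp [M], by omega, by omega, by omega⟩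
  have := nimC'Value_of_three_le (S := qApply nimΓ S M) (by omega)
    (by rwa [hsup, Nat.add_sub_cancel])
  omega

end Options

theorem exists_mem_optC'_nimC'Value_eq {S : Finset ℕ} {v : ℕ} (hv : v < nimC'Value S) :
    ∃ T ∈ optC' nimΓ S, nimC'Value T = v := by
  have hS : ∀ n ∈ S, n ≤ S.sup id := fun n hn => le_sup (f := id) hn
  rcases nimC'Value_cases S with ⟨-, -, h⟩ | ⟨h1, h⟩ | ⟨h2, hpred, h⟩ | ⟨h3, hpred, h⟩
  · omega
  · obtain rfl : v = 0 := by omega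
    exact exists_mem_optC'_nimC'Value_eq_zero_of_forall_eq_zero_or_eq (sup_id_mem (by omega))
      (by omega) fun n hn => by have := hS n hn; omega
  · have hk := sup_id_mem (S := S) (by omega)
    obtain rfl | rfl | hv2 : v = 0 ∨ v = 1 ∨ 2 ≤ v := by omega
    · by_cases h2' : S.sup id = 2
      · refine exists_mem_optC'_nimC'Value_eq_zero_of_forall_eq_zero_or_eq hk (by omega)
          fun n hn => ?_
        have : n ≠ S.sup id - 1 := fun h => hpred (h ▸ hn)
        have := hS n hn
        omega
      · exact exists_mem_optC'_nimC'Value_eq_zero_of_three_le hk hS (by omega)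
    · exact exists_mem_optC'_nimC'Value_eq_one hk hS h2
    · exact exists_mem_optC'_nimC'Value_eq_of_sub_one_not_mem hk hS hpred hv2 (by omega)
  · have hk := sup_id_mem (S := S) (by omega)
    obtain rfl | rfl | hv2 : v = 0 ∨ v = 1 ∨ 2 ≤ v := by omega
    · exact exists_mem_optC'_nimC'Value_eq_zero_of_three_le hk hS h3
    · exact exists_mem_optC'_nimC'Value_eq_one hk hS (by omega)
    · exact exists_mem_optC'_nimC'Value_eq_of_sub_one_mem hk hS hpred hv2 (by omega)

/-- In Ruleset C' of Quantum Nim, the Grundy value of a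
superposition `S` of single Nim heaps with maximum `k` is `0` for the two
exceptions `S = {1,2}` and `S = {0,1,2}`, `1` if `k = 1`, `k - 1` if
`k - 1 ∈ S`, and `k` otherwise. -/
theorem rulesetC'_single_heap_value (S : Finset ℕ) (hS : S.Nonempty) (k : ℕ)
    (hmax : S.max' hS = k) :
    HasGrundy (optC' nimΓ) S
      (if S = ({1, 2} : Finset ℕ) ∨ S = ({0, 1, 2} : Finset ℕ) then 0
       else if k = 1 then 1
       else if k - 1 ∈ S then k - 1
       else k) := by
  obtain rfl : S.sup id = k := by rw [← hmax, max'_eq_sup', sup'_eq_sup]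
  exact hasGrundy_of_mex wellFounded_optC'_nimΓ nimC'Value
    (fun _ _ => nimC'Value_ne_of_mem_optC') (fun _ _ => exists_mem_optC'_nimC'Value_eq) S

end QGame
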